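/- Let A < B, let Ψ₀ ≡ 1 and let Ψ₁,…,Ψ_{k−1} : [A,B] → ℝ be continuous such that {Ψ₀,…,Ψ_{k−1}} is a Chebyshev system on [A,B]. Let ξ be a finitely supported probability measure on [A,B] whose index satisfies I(ξ) < k/2. Then ξ is the unique finite nonnegative Borel measure η on [A,B] satisfying ∫_A^B Ψ_i dη = ∫_A^B Ψ_i dξ for all i = 0,…,k−1; in particular, any design with the same Ψ-moments as ξ coincides with ξ. -/

import Mathlib

open MeasureTheory Set Matrix

/-- A family of functions `Ψ₀, …, Ψ_{k-1}` is a Chebyshev system on `[A,B]` if for all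
points `A ≤ x₀ < x₁ < ⋯ < x_{k-1} ≤ B` the matrix `(Ψ i (x j))` has positive determinant. -/
def IsChebyshevSystem (A B : ℝ) {k : ℕ} (Ψ : Fin k → ℝ → ℝ) : Prop :=
  ∀ x : Fin k → ℝ, StrictMono x → (∀ j, x j ∈ Set.Icc A B) →
    0 < (Matrix.of fun i j : Fin k => Ψ i (x j)).det

/-- `ξ` is a design on `[A,B]`: a finitely supported probability measure
`ξ = ∑_{x ∈ s} w_x δ_x` with support points `s ⊆ [A,B]` and positive weights. -/
def IsDesignOn (A B : ℝ) (ξ : Measure ℝ) (s : Finset ℝ) : Prop :=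
  IsProbabilityMeasure ξ ∧ ↑s ⊆ Set.Icc A B ∧ (∀ x ∈ s, 0 < ξ {x}) ∧
    ξ = ∑ x ∈ s, ξ {x} • Measure.dirac x

/-- The entrywise integral `∫ C₂₂(x) dξ(x)` of a matrix-valued function. -/
noncomputable def matrixIntegral {p₁ : ℕ} (C : ℝ → Matrix (Fin p₁) (Fin p₁) ℝ)
    (ξ : Measure ℝ) : Matrix (Fin p₁) (Fin p₁) ℝ :=
  Matrix.of fun a b => ∫ x, C x a b ∂ξ

open Classical in
/-- The index of a design with support `s` on `[A,B]`: the number of support points in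
the open interval `(A,B)` plus one half times the number of support points among the
endpoints `{A, B}`. -/
noncomputable def designIndex (A B : ℝ) (s : Finset ℝ) : ℝ :=
  ((s.filter fun x => x ∈ Set.Ioo A B).card : ℝ) +
    ((s.filter fun x => x = A ∨ x = B).card : ℝ) / 2

/-!
Write `p_u(x) = ∑ᵢ uᵢ Ψᵢ(x) = u ⬝ᵥ Ψ(x)`. If `y₀ < ⋯ < y_{k-2}` are nodes in `[A,B]`, the
Chebyshev determinant with columns `Ψ(y₀), …, Ψ(y_{k-2})` and one free column `Ψ(x)` is such a
`p_u`: it vanishes at the nodes, and by the Chebyshev property its sign at any other `x` is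
`(-1)^#{j | y_j < x}`. Because `I(ξ) < k/2`, the support of `ξ` can be completed to `k - 1` nodes
in which every interior support point `x` appears as a pair `x, x + ε` (plus, for parity, possibly
a node `A + ε`). Across a pair the sign does not change, so letting `ε → 0⁺` and normalising, a
limit point gives `u ≠ 0` with `p_u ≥ 0` on `[A,B]` and `p_u = 0` on the support of `ξ`.

If `η` has the moments of `ξ`, then `∫ p_u dη = ∫ p_u dξ = 0`, so both measures live on the
zero set of `p_u`, which has fewer than `k` points. On at most `k` points the vectors `Ψ(x)` are
linearly independent, so the moments determine the weights and `η = ξ`.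
-/

open Filter Topology
open scoped Finset ENNReal

lemma continuousOn_dotProduct {X : Type*} [TopologicalSpace X] {k : ℕ} {Ψ : Fin k → X → ℝ}
    {S : Set X} (u : Fin k → ℝ) (hΨ : ∀ i, ContinuousOn (Ψ i) S) :
    ContinuousOn (fun x => u ⬝ᵥ (Ψ · x)) S := by
  simp only [dotProduct]
  fun_prop

namespace IsChebyshevSystem

variable {A B : ℝ} {k : ℕ} {Ψ : Fin k → ℝ → ℝ}

lemma det_ne_zero (hΨ : IsChebyshevSystem A B Ψ) {W : Finset ℝ} (hW : ↑W ⊆ Icc A B)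
    (hk : #W = k) : (Matrix.of fun i j => Ψ i (W.orderEmbOfFin hk j)).det ≠ 0 :=
  (hΨ _ (W.orderEmbOfFin hk).strictMono fun j => hW (W.orderEmbOfFin_mem hk j)).ne'

lemma card_lt_of_dotProduct_eq_zero (hΨ : IsChebyshevSystem A B Ψ) {u : Fin k → ℝ}
    (hu : u ≠ 0) {T : Finset ℝ} (hT : ↑T ⊆ Icc A B) (hzero : ∀ x ∈ T, u ⬝ᵥ (Ψ · x) = 0) :
    #T < k := by
  by_contra! hcard
  obtain ⟨W, hWT, hW⟩ := Finset.exists_subset_card_eq hcard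
  refine hu (eq_zero_of_vecMul_eq_zero (hΨ.det_ne_zero (subset_trans (by simpa) hT) hW) ?_)
  ext j
  simpa [vecMul, dotProduct] using hzero _ (hWT (W.orderEmbOfFin_mem hW j))

lemma finite_setOf_dotProduct_eq_zero (hΨ : IsChebyshevSystem A B Ψ) {u : Fin k → ℝ}
    (hu : u ≠ 0) : {x ∈ Icc A B | u ⬝ᵥ (Ψ · x) = 0}.Finite := by
  by_contra hinf
  obtain ⟨T, hT, hTk⟩ := Set.Infinite.exists_subset_card_eq hinf k
  exact (hΨ.card_lt_of_dotProduct_eq_zero hu (fun x hx => (hT hx).1)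
    fun x hx => (hT hx).2).ne hTk

lemma linearIndepOn (hΨ : IsChebyshevSystem A B Ψ) (hAB : A < B) {W : Finset ℝ}
    (hW : ↑W ⊆ Icc A B) (hk : #W ≤ k) : LinearIndepOn ℝ (fun x i => Ψ i x) (W : Set ℝ) := by
  classical
  obtain ⟨F, hF, hFcard⟩ :=
    ((Set.Icc_infinite hAB).sdiff W.finite_toSet).exists_subset_card_eq (k - #W)
  have hcard : #(W ∪ F) = k := by
    rw [Finset.card_union_of_disjoint (Finset.disjoint_right.2 fun x hx => (hF hx).2)]
    omega
  have hWF : ↑(W ∪ F) ⊆ Icc A B := by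
    rw [Finset.coe_union]
    exact Set.union_subset hW fun x hx => (hF hx).1
  have hli : LinearIndepOn ℝ (fun x i => Ψ i x) ↑(W ∪ F) := by
    rw [← Finset.range_orderEmbOfFin _ hcard,
      linearIndepOn_range_iff (Finset.orderEmbOfFin _ hcard).injective]
    exact linearIndependent_cols_of_det_ne_zero (hΨ.det_ne_zero hWF hcard)
  exact hli.mono (by simp)

end IsChebyshevSystem

lemma StrictMono.lt_iff_lt_card_filter {α : Type*} [LinearOrder α] {K : ℕ} {y : Fin K → α}
    (hy : StrictMono y) (x : α) (t : Fin K) : y t < x ↔ (t : ℕ) < #{t | y t < x} := by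
  constructor
  · intro h
    have : Finset.Iic t ⊆ ({t | y t < x} : Finset (Fin K)) := fun t' ht' => by
      simpa using (hy.monotone (Finset.mem_Iic.1 ht')).trans_lt h
    simpa using Finset.card_le_card this
  · intro h
    by_contra! h'
    have : ({t | y t < x} : Finset (Fin K)) ⊆ Finset.Iio t := fun t' ht' => by
      simpa using hy.lt_iff_lt.1 ((Finset.mem_filter.1 ht').2.trans_le h')
    have := Finset.card_le_card this
    simp only [Fin.card_Iio] at this
    omega

section NodeCoeffs

variable {K : ℕ}

/-- Cofactors along the column of `x` in the Chebyshev matrix with columns `x, y₀, …, y_{K-1}`. -/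
def nodeCoeffs (Ψ : Fin (K + 1) → ℝ → ℝ) (y : Fin K → ℝ) : Fin (K + 1) → ℝ :=
  fun i => (-1) ^ (i : ℕ) * (Matrix.of fun a b => Ψ (i.succAbove a) (y b)).det

lemma det_insertNth_eq_nodeCoeffs (Ψ : Fin (K + 1) → ℝ → ℝ) (y : Fin K → ℝ) (c : Fin (K + 1))
    (x : ℝ) : (Matrix.of fun i j => Ψ i ((c.insertNth x y : Fin (K + 1) → ℝ) j)).det
      = (-1) ^ (c : ℕ) * nodeCoeffs Ψ y ⬝ᵥ (Ψ · x) := by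
  rw [det_succ_column _ c, dotProduct, Finset.mul_sum]
  refine Finset.sum_congr rfl fun i _ => ?_
  simp only [nodeCoeffs, of_apply, submatrix, Fin.insertNth_apply_same,
    Fin.insertNth_apply_succAbove, pow_add]
  ring

lemma nodeCoeffs_dotProduct_eq_zero (Ψ : Fin (K + 1) → ℝ → ℝ) (y : Fin K → ℝ) (t : Fin K) :
    nodeCoeffs Ψ y ⬝ᵥ (Ψ · (y t)) = 0 := by
  have h := det_insertNth_eq_nodeCoeffs Ψ y 0 (y t)
  rw [det_zero_of_column_eq (Fin.succ_ne_zero t).symm fun i => by simp] at h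
  simpa using h.symm

lemma IsChebyshevSystem.neg_one_pow_mul_nodeCoeffs_dotProduct_pos {A B : ℝ}
    {Ψ : Fin (K + 1) → ℝ → ℝ} (hΨ : IsChebyshevSystem A B Ψ) {y : Fin K → ℝ}
    (hy : StrictMono y) (hyI : ∀ t, y t ∈ Icc A B) {x : ℝ} (hx : x ∈ Icc A B)
    (hxy : ∀ t, y t ≠ x) : 0 < (-1) ^ #{t | y t < x} * nodeCoeffs Ψ y ⬝ᵥ (Ψ · x) := by
  set c : Fin (K + 1) :=
    ⟨#{t | y t < x}, Nat.lt_succ_of_le ((Finset.card_le_univ _).trans_eq (Fintype.card_fin K))⟩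
  have hmono : StrictMono (c.insertNth x y : Fin (K + 1) → ℝ) := by
    refine Fin.strictMono_insertNth_iff _ _ _ |>.2 ⟨hy, fun t ht => ?_, fun t ht => ?_⟩
    · exact (hy.lt_iff_lt_card_filter x t).2 ht
    · refine lt_of_le_of_ne (not_lt.1 fun h => ?_) (hxy t).symm
      exact absurd ((hy.lt_iff_lt_card_filter x t).1 h) (not_lt.2 ht)
  have hpos := hΨ _ hmono fun j =>
    Fin.succAboveCases c (by simpa using hx) (fun t => by simpa using hyI t) j
  rwa [det_insertNth_eq_nodeCoeffs] at hpos

lemma IsChebyshevSystem.exists_vanishing_alternating {A B : ℝ} {Ψ : Fin (K + 1) → ℝ → ℝ}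
    (hΨ : IsChebyshevSystem A B Ψ) {N : Finset ℝ} (hN : #N = K) (hNI : ↑N ⊆ Icc A B) :
    ∃ u : Fin (K + 1) → ℝ, (∀ x ∈ N, u ⬝ᵥ (Ψ · x) = 0) ∧
      ∀ x ∈ Icc A B, x ∉ N → 0 < (-1) ^ #{z ∈ N | z < x} * u ⬝ᵥ (Ψ · x) := by
  set y := N.orderEmbOfFin hN
  refine ⟨nodeCoeffs Ψ y, fun x hx => ?_, fun x hx hxN => ?_⟩
  · obtain ⟨t, rfl⟩ : x ∈ Set.range y := by rwa [Finset.range_orderEmbOfFin]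
    exact nodeCoeffs_dotProduct_eq_zero Ψ y t
  · have hcount : #{t | y t < x} = #{z ∈ N | z < x} := by
      rw [← N.map_orderEmbOfFin_univ hN, Finset.filter_map, Finset.card_map]
      rfl
    rw [← hcount]
    exact hΨ.neg_one_pow_mul_nodeCoeffs_dotProduct_pos y.strictMono
      (fun t => hNI (N.orderEmbOfFin_mem hN t)) hx fun t h => hxN (h ▸ N.orderEmbOfFin_mem hN t)

end NodeCoeffs

lemma ContinuousOn.nonneg_of_nonneg_on_Ioo_diff {A B : ℝ} (hAB : A < B) {f : ℝ → ℝ}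
    (hf : ContinuousOn f (Icc A B)) {L : Set ℝ} (hL : L.Countable)
    (h : ∀ x ∈ Ioo A B \ L, 0 ≤ f x) : ∀ x ∈ Icc A B, 0 ≤ f x := by
  have hclosed : IsClosed (Icc A B ∩ f ⁻¹' Ici 0) :=
    hf.preimage_isClosed_of_isClosed isClosed_Icc isClosed_Ici
  have hIoo : Ioo A B ⊆ Icc A B ∩ f ⁻¹' Ici 0 :=
    ((hL.dense_compl ℝ).open_subset_closure_inter isOpen_Ioo).trans <|
      closure_minimal (fun x hx => ⟨Ioo_subset_Icc_self hx.1, h x hx⟩) hclosed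
  intro x hx
  rw [← closure_Ioo hAB.ne] at hx
  exact (closure_minimal hIoo hclosed hx).2

lemma exists_nonneg_of_eventually_pos {ι : Type*} {l : Filter ι} [l.NeBot] {A B : ℝ}
    (hAB : A < B) {k : ℕ} {Ψ : Fin k → ℝ → ℝ} (hcont : ∀ i, ContinuousOn (Ψ i) (Icc A B))
    (u : ι → Fin k → ℝ) {L : Set ℝ} (hL : L.Countable)
    (hpos : ∀ x ∈ Ioo A B \ L, ∀ᶠ a in l, 0 < u a ⬝ᵥ (Ψ · x)) {S : Set ℝ}
    (hzero : ∀ x ∈ S, ∀ᶠ a in l, u a ⬝ᵥ (Ψ · x) = 0) :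
    ∃ v ≠ 0, (∀ x ∈ Icc A B, 0 ≤ v ⬝ᵥ (Ψ · x)) ∧ ∀ x ∈ S, v ⬝ᵥ (Ψ · x) = 0 := by
  obtain ⟨x₀, hx₀⟩ :=
    (hL.dense_compl ℝ).inter_open_nonempty _ isOpen_Ioo (nonempty_Ioo.2 hAB)
  have hsphere : ∀ᶠ a in l, ‖u a‖⁻¹ • u a ∈ Metric.sphere (0 : Fin k → ℝ) 1 :=
    (hpos x₀ hx₀).mono fun a ha => by
      simpa using norm_smul_inv_norm (𝕜 := ℝ) (x := u a) fun h => by simp [h] at ha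
  obtain ⟨v, hv, hcluster⟩ :=
    (isCompact_sphere (0 : Fin k → ℝ) 1).exists_mapClusterPt (tendsto_principal.2 hsphere)
  have hlim (x : ℝ) (C : Set ℝ) (hC : IsClosed C)
      (h : ∀ᶠ a in l, ‖u a‖⁻¹ • u a ⬝ᵥ (Ψ · x) ∈ C) : v ⬝ᵥ (Ψ · x) ∈ C :=
    (hC.preimage (f := fun w => w ⬝ᵥ (Ψ · x)) (by fun_prop)).mem_of_mapClusterPt hcluster h
  refine ⟨v, ne_zero_of_mem_sphere one_ne_zero ⟨v, hv⟩, ?_, fun x hx => ?_⟩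
  · refine (continuousOn_dotProduct v hcont).nonneg_of_nonneg_on_Ioo_diff hAB hL fun x hx => ?_
    refine hlim x _ isClosed_Ici ((hpos x hx).mono fun a ha => ?_)
    rw [smul_dotProduct, smul_eq_mul]
    exact mul_nonneg (by positivity) ha.le
  · exact hlim x {0} isClosed_singleton
      ((hzero x hx).mono fun a ha => by simp [smul_dotProduct, ha])

lemma eventually_add_lt_iff (q x : ℝ) : ∀ᶠ ε in 𝓝[>] 0, (q + ε < x ↔ q < x) := by
  rcases lt_or_ge q x with h | h
  · filter_upwards [nhdsWithin_le_nhds (eventually_lt_nhds (sub_pos.2 h))] with ε hε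
    exact iff_of_true (by linarith) h
  · filter_upwards [self_mem_nhdsWithin] with ε (hε : 0 < ε)
    exact iff_of_false (by linarith) h.not_gt

lemma eventually_forall_add_lt_iff (Q F : Finset ℝ) :
    ∀ᶠ ε in 𝓝[>] 0, ∀ q ∈ Q, ∀ z ∈ F, (q + ε < z ↔ q < z) := by
  simp only [Filter.eventually_all_finset]
  exact fun q _ z _ => eventually_add_lt_iff q z

noncomputable def perturbNodes (T Q : Finset ℝ) (ε : ℝ) : Finset ℝ := T ∪ Q.image (· + ε)

section PerturbNodes

variable {T Q : Finset ℝ} {ε : ℝ}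

lemma disjoint_image_add (hε : 0 < ε) (h : ∀ q ∈ Q, ∀ z ∈ T, (q + ε < z ↔ q < z)) :
    Disjoint T (Q.image (· + ε)) := by
  simp only [Finset.disjoint_right, Finset.mem_image]
  rintro _ ⟨q, hq, rfl⟩ hT
  have := h q hq _ hT
  simp only [lt_self_iff_false, false_iff, not_lt] at this
  linarith

lemma card_perturbNodes (hε : 0 < ε) (h : ∀ q ∈ Q, ∀ z ∈ T, (q + ε < z ↔ q < z)) :
    #(perturbNodes T Q ε) = #T + #Q := by
  rw [perturbNodes, Finset.card_union_of_disjoint (disjoint_image_add hε h),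
    Finset.card_image_of_injective _ (add_left_injective ε)]

lemma perturbNodes_subset_Icc {A B : ℝ} (hε : 0 < ε) (hT : ↑T ⊆ Icc A B) (hQ : ↑Q ⊆ Ico A B)
    (hB : ∀ q ∈ Q, (q + ε < B ↔ q < B)) : ↑(perturbNodes T Q ε) ⊆ Icc A B := by
  simp only [perturbNodes, Finset.coe_union, Finset.coe_image, Set.union_subset_iff,
    Set.image_subset_iff]
  refine ⟨hT, fun q hq => ?_⟩
  have := hQ hq
  exact ⟨by linarith [this.1], ((hB q hq).2 this.2).le⟩

lemma notMem_perturbNodes {x : ℝ} (hε : 0 < ε) (hxT : x ∉ T)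
    (hx : ∀ q ∈ Q, (q + ε < x ↔ q < x)) : x ∉ perturbNodes T Q ε := by
  have := disjoint_image_add (T := {x}) hε (by simpa using hx)
  simp_all [perturbNodes, Finset.disjoint_singleton_left]

lemma card_filter_perturbNodes_lt {x : ℝ} (hε : 0 < ε)
    (hT : ∀ q ∈ Q, ∀ z ∈ T, (q + ε < z ↔ q < z)) (hx : ∀ q ∈ Q, (q + ε < x ↔ q < x)) :
    #{z ∈ perturbNodes T Q ε | z < x} = #{z ∈ T | z < x} + #{q ∈ Q | q < x} := by
  rw [perturbNodes, Finset.filter_union, Finset.card_union_of_disjoint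
    (Finset.disjoint_filter_filter (disjoint_image_add hε hT)), Finset.filter_image,
    Finset.card_image_of_injective _ (add_left_injective ε), Finset.filter_congr hx]

end PerturbNodes

lemma card_filter_lt_of_subset_Icc {A B x : ℝ} {S : Finset ℝ} (hS : ↑S ⊆ Icc A B) (hx : x ∈ Ioo A B) :
    #{z ∈ S | z < x} = #{z ∈ S | z = A} + #{z ∈ {z ∈ S | z ∈ Ioo A B} | z < x} := by
  rw [Finset.filter_filter, ← Finset.card_union_of_disjoint
    (Finset.disjoint_filter.2 fun z _ hz h => h.1.1.ne' hz), ← Finset.filter_or]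
  refine congrArg Finset.card (Finset.filter_congr fun z hz => ?_)
  obtain ⟨hAz, hzB⟩ := hS hz
  constructor
  · intro h
    rcases hAz.eq_or_lt with rfl | h'
    · exact Or.inl rfl
    · exact Or.inr ⟨⟨h', h.trans hx.2⟩, h⟩
  · rintro (rfl | h)
    exacts [hx.1, h.2]

theorem IsChebyshevSystem.exists_nonneg_vanishing {A B : ℝ} (hAB : A < B) {K : ℕ}
    {Ψ : Fin (K + 1) → ℝ → ℝ} (hΨ : IsChebyshevSystem A B Ψ)
    (hcont : ∀ i, ContinuousOn (Ψ i) (Icc A B)) {T Q : Finset ℝ} (hT : ↑T ⊆ Icc A B)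
    (hQ : ↑Q ⊆ Ico A B) (hTQ : {z ∈ Q | z ∈ Ioo A B} = {z ∈ T | z ∈ Ioo A B})
    (hcard : #T + #Q = K) :
    ∃ u ≠ 0, (∀ x ∈ Icc A B, 0 ≤ u ⬝ᵥ (Ψ · x)) ∧ ∀ x ∈ T, u ⬝ᵥ (Ψ · x) = 0 := by
  have hgood : ∀ᶠ ε in 𝓝[>] 0, 0 < ε ∧ ∀ q ∈ Q, ∀ z ∈ insert B T, (q + ε < z ↔ q < z) :=
    eventually_mem_nhdsWithin.and (eventually_forall_add_lt_iff Q _)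
  have hnodes : ∀ᶠ ε in 𝓝[>] 0,
      #(perturbNodes T Q ε) = K ∧ ↑(perturbNodes T Q ε) ⊆ Icc A B := by
    filter_upwards [hgood] with ε ⟨hε, h⟩
    simp only [Finset.mem_insert, forall_eq_or_imp] at h
    exact ⟨hcard ▸ card_perturbNodes hε fun q hq => (h q hq).2,
      perturbNodes_subset_Icc hε hT hQ fun q hq => (h q hq).1⟩
  obtain ⟨u, hu⟩ := (hnodes.mono fun ε h => hΨ.exists_vanishing_alternating h.1 h.2).choice
  -- Below an interior `x ∉ T` the nodes come in pairs `q, q + ε`, except those coming from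
  -- `A ∈ T` and `A ∈ Q`, which `e` counts.
  set e := #{z ∈ T | z = A} + #{z ∈ Q | z = A}
  refine exists_nonneg_of_eventually_pos (l := 𝓝[>] 0) hAB hcont (fun ε => (-1 : ℝ) ^ e • u ε)
    T.countable_toSet (fun x hx => ?_) (fun x hx => ?_)
  · filter_upwards [hu, hgood, eventually_forall_add_lt_iff Q {x}] with ε huε ⟨hε, h⟩ hx'
    simp only [Finset.mem_insert, forall_eq_or_imp, Finset.mem_singleton, forall_eq] at h hx'
    have hpos := huε.2 x (Ioo_subset_Icc_self hx.1) (notMem_perturbNodes hε hx.2 hx')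
    have hparity : (#{z ∈ T | z < x} + #{q ∈ Q | q < x}) % 2 = e % 2 := by
      rw [card_filter_lt_of_subset_Icc hT hx.1, card_filter_lt_of_subset_Icc (hQ.trans Ico_subset_Icc_self) hx.1, hTQ]
      omega
    rw [neg_one_pow_eq_pow_mod_two, card_filter_perturbNodes_lt hε (fun q hq => (h q hq).2) hx',
      hparity, ← neg_one_pow_eq_pow_mod_two] at hpos
    simpa [smul_dotProduct] using hpos
  · filter_upwards [hu] with ε huε
    simp [smul_dotProduct, huε.1 x (Finset.mem_union_left _ hx)]

lemma exists_nodes_of_designIndex_lt {A B : ℝ} (hAB : A < B) {s : Finset ℝ}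
    (hs : ↑s ⊆ Icc A B) {K : ℕ} (h : designIndex A B s < ((K + 1 : ℕ) : ℝ) / 2) :
    ∃ T Q : Finset ℝ, s ⊆ T ∧ ↑T ⊆ Icc A B ∧ ↑Q ⊆ Ico A B ∧
      {z ∈ Q | z ∈ Ioo A B} = {z ∈ T | z ∈ Ioo A B} ∧ #T + #Q = K := by
  set r := #{z ∈ s | z ∈ Ioo A B}
  set e := #{z ∈ s | z = A ∨ z = B}
  have hbudget : 2 * r + e < K + 1 := by
    unfold designIndex at h
    exact_mod_cast (by push_cast at h; linarith : (2 * r + e : ℝ) < K + 1)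
  have hsre : #s = r + e := by
    rw [← Finset.card_filter_add_card_filter_not (· ∈ Ioo A B)]
    congr 2
    refine Finset.filter_congr fun z hz => ?_
    obtain ⟨hAz, hzB⟩ := hs hz
    simp only [mem_Ioo, not_and_or, not_lt]
    constructor
    · rintro (h | h)
      exacts [Or.inl (le_antisymm h hAz), Or.inr (le_antisymm hzB h)]
    · rintro (rfl | rfl)
      exacts [Or.inl le_rfl, Or.inr le_rfl]
  set d := K - (2 * r + e)
  obtain ⟨F, hF, hFcard⟩ :=
    ((Set.Ioo_infinite hAB).sdiff s.finite_toSet).exists_subset_card_eq (d / 2)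
  have hsF : Disjoint s F := Finset.disjoint_right.2 fun z hz => (hF hz).2
  have hFIoo : {z ∈ F | z ∈ Ioo A B} = F := Finset.filter_true_of_mem fun z hz => (hF hz).1
  set T := s ∪ F
  -- For odd `d`, the extra node `A + ε` tends to the endpoint `A`: no interior sign change.
  set Q := (if d % 2 = 0 then ∅ else {A}) ∪ {z ∈ T | z ∈ Ioo A B}
  have hQT : {z ∈ Q | z ∈ Ioo A B} = {z ∈ T | z ∈ Ioo A B} := by
    simp only [Q, Finset.filter_union, Finset.filter_filter, and_self]
    split_ifs <;> simp [Finset.filter_singleton]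
  refine ⟨T, Q, Finset.subset_union_left, ?_, ?_, hQT, ?_⟩
  · simp only [T, Finset.coe_union]
    exact Set.union_subset hs fun z hz => Ioo_subset_Icc_self (hF hz).1
  · simp only [Q, Finset.coe_union, Finset.coe_filter]
    refine Set.union_subset ?_ fun z hz => Ioo_subset_Ico_self hz.2
    split_ifs <;> simp [hAB]
  · have hTIoo : #{z ∈ T | z ∈ Ioo A B} = r + d / 2 := by
      rw [Finset.filter_union, Finset.card_union_of_disjoint
        (Finset.disjoint_filter_filter hsF), hFIoo, hFcard]
    have hQcard : #Q = d % 2 + (r + d / 2) := by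
      rw [Finset.card_union_of_disjoint, hTIoo]
      · split_ifs <;> simp_all
      · split_ifs <;> simp
    rw [hQcard, Finset.card_union_of_disjoint hsF, hsre, hFcard]
    omega

section Measures

variable {α : Type*} [MeasurableSpace α] [MeasurableSingletonClass α] {μ ν : Measure α}

lemma ae_mem_of_eq_sum_dirac {s : Finset α} {w : α → ℝ≥0∞}
    (h : μ = ∑ x ∈ s, w x • Measure.dirac x) : ∀ᵐ y ∂μ, y ∈ s := by
  rw [h, ae_iff]
  simp +contextual [Measure.finsetSum_apply]

lemma MeasureTheory.Measure.ext_of_ae_mem_finset {Z : Finset α} (hμ : ∀ᵐ x ∂μ, x ∈ Z) (hν : ∀ᵐ x ∂ν, x ∈ Z)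
    (h : ∀ x ∈ Z, μ {x} = ν {x}) : μ = ν := by
  classical
  ext E hE
  rw [← measure_inter_conull (mem_ae_iff.1 hμ), ← measure_inter_conull (mem_ae_iff.1 hν)]
  have hE : E ∩ {x | x ∈ Z} = ↑{x ∈ Z | x ∈ E} := by ext; simp [and_comm]
  rw [hE, ← sum_measure_singleton, ← sum_measure_singleton]
  exact Finset.sum_congr rfl fun x hx => h x (Finset.mem_filter.1 hx).1

lemma integral_eq_sum_of_ae_mem_finset [IsFiniteMeasure μ] {Z : Finset α} (hμ : ∀ᵐ x ∂μ, x ∈ Z)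
    (f : α → ℝ) : ∫ x, f x ∂μ = ∑ x ∈ Z, μ.real {x} • f x := by
  rw [← setIntegral_finset _ IntegrableOn.finset, Measure.restrict_eq_self_of_ae_mem hμ]

end Measures

lemma ContinuousOn.integrable_of_ae_mem {X E : Type*} [TopologicalSpace X] [MeasurableSpace X]
    [OpensMeasurableSpace X] [T2Space X] [NormedAddCommGroup E] {μ : Measure X}
    [IsFiniteMeasure μ] {S : Set X} (hS : IsCompact S) {f : X → E} (hf : ContinuousOn f S)
    (hμ : ∀ᵐ x ∂μ, x ∈ S) : Integrable f μ := by
  rw [← Measure.restrict_eq_self_of_ae_mem hμ]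
  exact hf.integrableOn_compact hS

lemma integral_dotProduct {α : Type*} [MeasurableSpace α] {μ : Measure α} {k : ℕ}
    {Ψ : Fin k → α → ℝ} (u : Fin k → ℝ) (hΨ : ∀ i, Integrable (Ψ i) μ) :
    ∫ x, u ⬝ᵥ (Ψ · x) ∂μ = u ⬝ᵥ fun i => ∫ x, Ψ i x ∂μ := by
  simp only [dotProduct]
  rw [integral_finsetSum _ fun i _ => (hΨ i).const_mul (u i)]
  simp only [integral_const_mul]

lemma ae_dotProduct_eq_zero_of_integral_eq {A B : ℝ} {k : ℕ} {Ψ : Fin k → ℝ → ℝ}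
    (hcont : ∀ i, ContinuousOn (Ψ i) (Icc A B)) {μ ν : Measure ℝ} [IsFiniteMeasure μ]
    [IsFiniteMeasure ν] (hμ : ∀ᵐ x ∂μ, x ∈ Icc A B) (hν : ∀ᵐ x ∂ν, x ∈ Icc A B)
    (h : ∀ i, ∫ x, Ψ i x ∂μ = ∫ x, Ψ i x ∂ν) {u : Fin k → ℝ}
    (hnonneg : ∀ x ∈ Icc A B, 0 ≤ u ⬝ᵥ (Ψ · x)) (hν0 : ∀ᵐ x ∂ν, u ⬝ᵥ (Ψ · x) = 0) :
    ∀ᵐ x ∂μ, x ∈ Icc A B ∧ u ⬝ᵥ (Ψ · x) = 0 := by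
  have hint {ρ : Measure ℝ} [IsFiniteMeasure ρ] (hρ : ∀ᵐ x ∂ρ, x ∈ Icc A B) (i : Fin k) :
      Integrable (Ψ i) ρ := (hcont i).integrable_of_ae_mem isCompact_Icc hρ
  have hμ0 : ∫ x, u ⬝ᵥ (Ψ · x) ∂μ = 0 := by
    rw [integral_dotProduct u (hint hμ), funext h, ← integral_dotProduct u (hint hν)]
    exact integral_eq_zero_of_ae hν0
  refine hμ.and ((integral_eq_zero_iff_of_nonneg_ae (hμ.mono hnonneg) ?_).1 hμ0)
  exact (continuousOn_dotProduct u hcont).integrable_of_ae_mem isCompact_Icc hμ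

theorem IsChebyshevSystem.measure_eq_of_integral_eq {A B : ℝ} {k : ℕ} {Ψ : Fin k → ℝ → ℝ}
    (hΨ : IsChebyshevSystem A B Ψ) (hAB : A < B) {Z : Finset ℝ} (hZ : ↑Z ⊆ Icc A B)
    (hk : #Z ≤ k) {μ ν : Measure ℝ} [IsFiniteMeasure μ] [IsFiniteMeasure ν]
    (hμ : ∀ᵐ x ∂μ, x ∈ Z) (hν : ∀ᵐ x ∂ν, x ∈ Z) (h : ∀ i, ∫ x, Ψ i x ∂μ = ∫ x, Ψ i x ∂ν) :
    μ = ν := by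
  have hsum : ∑ x ∈ Z, (μ.real {x} - ν.real {x}) • (fun i => Ψ i x) = 0 := by
    ext i
    have := h i
    rw [integral_eq_sum_of_ae_mem_finset hμ, integral_eq_sum_of_ae_mem_finset hν] at this
    simp only [smul_eq_mul] at this
    simp [sub_mul, Finset.sum_sub_distrib, this]
  have hweights := linearIndepOn_iff'.1 (hΨ.linearIndepOn hAB hZ hk) Z _ subset_rfl hsum
  refine Measure.ext_of_ae_mem_finset hμ hν fun x hx => ?_
  exact (ENNReal.toReal_eq_toReal_iff' (measure_ne_top _ _) (measure_ne_top _ _)).1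
    (sub_eq_zero.1 (hweights x hx))

theorem IsChebyshevSystem.measure_eq_of_ae_dotProduct_eq_zero {A B : ℝ} {k : ℕ}
    {Ψ : Fin k → ℝ → ℝ} (hΨ : IsChebyshevSystem A B Ψ) (hAB : A < B) {u : Fin k → ℝ}
    (hu : u ≠ 0) {μ ν : Measure ℝ} [IsFiniteMeasure μ] [IsFiniteMeasure ν]
    (hμ : ∀ᵐ x ∂μ, x ∈ Icc A B ∧ u ⬝ᵥ (Ψ · x) = 0) (hν : ∀ᵐ x ∂ν, x ∈ Icc A B ∧ u ⬝ᵥ (Ψ · x) = 0)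
    (h : ∀ i, ∫ x, Ψ i x ∂μ = ∫ x, Ψ i x ∂ν) : μ = ν := by
  set Z := (hΨ.finite_setOf_dotProduct_eq_zero hu).toFinset
  have hZ : ↑Z ⊆ Icc A B := by simp +contextual [Z, Set.subset_def]
  refine hΨ.measure_eq_of_integral_eq hAB hZ
    (hΨ.card_lt_of_dotProduct_eq_zero hu hZ (by simp [Z])).le ?_ ?_ h
  · simpa [Z] using hμ
  · simpa [Z] using hν

theorem design_with_small_index_unique_general
    {k : ℕ} (A B : ℝ) (hAB : A < B)
    (Ψ : Fin k → ℝ → ℝ)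
    (hcontΨ : ∀ i, ContinuousOn (Ψ i) (Set.Icc A B))
    (hCheb : IsChebyshevSystem A B Ψ)
    (ξ : Measure ℝ) (s : Finset ℝ) (hξ : IsDesignOn A B ξ s)
    (hidx : designIndex A B s < (k : ℝ) / 2) :
    ∀ η : Measure ℝ, IsFiniteMeasure η → η (Set.Icc A B)ᶜ = 0 →
      (∀ i, ∫ x, Ψ i x ∂η = ∫ x, Ψ i x ∂ξ) → η = ξ := by
  obtain ⟨K, rfl⟩ : ∃ K, k = K + 1 := Nat.exists_eq_add_one.2 <| by
    have : 0 ≤ designIndex A B s := by rw [designIndex]; positivity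
    exact_mod_cast (by linarith : (0 : ℝ) < k)
  intro η _ hηI hmom
  obtain ⟨_, hsI, -, hξs⟩ := hξ
  obtain ⟨T, Q, hsT, hT, hQ, hTQ, hcard⟩ := exists_nodes_of_designIndex_lt hAB hsI hidx
  obtain ⟨u, hu, hnonneg, hzero⟩ := hCheb.exists_nonneg_vanishing hAB hcontΨ hT hQ hTQ hcard
  have hξ0 : ∀ᵐ x ∂ξ, x ∈ Icc A B ∧ u ⬝ᵥ (Ψ · x) = 0 :=
    (ae_mem_of_eq_sum_dirac hξs).mono fun x hx => ⟨hsI hx, hzero x (hsT hx)⟩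
  refine hCheb.measure_eq_of_ae_dotProduct_eq_zero hAB hu ?_ hξ0 hmom
  exact ae_dotProduct_eq_zero_of_integral_eq hcontΨ (mem_ae_iff.2 hηI)
    (hξ0.mono fun x hx => hx.1) hmom hnonneg (hξ0.mono fun x hx => hx.2)

/-- If `{Ψ₀,…,Ψ_{k-1}}` (with `Ψ₀ ≡ 1`) is a Chebyshev system on `[A,B]` and `ξ` is a
design whose index satisfies `I(ξ) < k/2`, then `ξ` is the unique finite nonnegative
Borel measure on `[A,B]` with its `Ψ`-moments. -/
theorem design_with_small_index_unique
    {k : ℕ} (hk : 0 < k) (A B : ℝ) (hAB : A < B)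
    (Ψ : Fin k → ℝ → ℝ)
    (hΨ0 : ∀ x : ℝ, Ψ ⟨0, hk⟩ x = 1)
    (hcontΨ : ∀ i, ContinuousOn (Ψ i) (Set.Icc A B))
    (hCheb : IsChebyshevSystem A B Ψ)
    (ξ : Measure ℝ) (s : Finset ℝ) (hξ : IsDesignOn A B ξ s)
    (hidx : designIndex A B s < (k : ℝ) / 2) :
    ∀ η : Measure ℝ, IsFiniteMeasure η → η (Set.Icc A B)ᶜ = 0 →
      (∀ i, ∫ x, Ψ i x ∂η = ∫ x, Ψ i x ∂ξ) → η = ξ :=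
  design_with_small_index_unique_general A B hAB Ψ hcontΨ hCheb ξ s hξ hidx
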